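/- In a k-truss G, for every vertex v, the induced subgraph on the closed neighborhood N(v) ∪ {v} has at least binomial(k+2, 2) edges. -/

import Mathlib

/-- A graph is a `k`-truss if it has no isolated vertices and every edge is
contained in at least `k` triangles. -/
def SimpleGraph.IsTruss {V : Type*} (G : SimpleGraph V) (k : ℕ) : Prop :=
  (∀ v : V, ∃ u : V, G.Adj v u) ∧
  ∀ ⦃u v : V⦄, G.Adj u v → k ≤ {w : V | G.Adj u w ∧ G.Adj v w}.ncard

/-!
For an edge `uv` of a `k`-truss, `u` together with the `≥ k` common neighbours of `u` and `v`
gives `k + 1` neighbours of `v` inside the closed neighbourhood of `u`. Hence `v` has degree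
`≥ k + 1`, so its closed neighbourhood `N⁺(v)` has `≥ k + 2` vertices, and every vertex of
`N⁺(v)` has `≥ k + 1` neighbours inside `N⁺(v)`. The handshake lemma in `G[N⁺(v)]` then gives
at least `(k + 2)(k + 1) / 2` edges.
-/

namespace SimpleGraph

open Finset

variable {V : Type*} {G : SimpleGraph V}

lemma card_mul_le_two_mul_card_edgeFinset [Fintype V] [DecidableRel G.Adj] (s : Finset V) {d : ℕ}
    (hd : ∀ x ∈ s, d ≤ G.degree x) : #s * d ≤ 2 * #G.edgeFinset :=
  calc #s * d = ∑ _x ∈ s, d := by rw [sum_const, smul_eq_mul]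
    _ ≤ ∑ x ∈ s, G.degree x := sum_le_sum hd
    _ ≤ ∑ x, G.degree x := sum_le_univ_sum_of_nonneg fun _ ↦ Nat.zero_le _
    _ = 2 * #G.edgeFinset := G.sum_degrees_eq_twice_card_edges

lemma choose_two_le_card_edgeFinset [Fintype V] [DecidableRel G.Adj] (s : Finset V) {n : ℕ}
    (hs : n + 1 ≤ #s) (hd : ∀ x ∈ s, n ≤ G.degree x) : (n + 1).choose 2 ≤ #G.edgeFinset := by
  rw [Nat.choose_two_right, Nat.add_sub_cancel]
  refine Nat.div_le_of_le_mul ?_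
  calc (n + 1) * n ≤ #s * n := Nat.mul_le_mul_right _ hs
    _ ≤ 2 * #G.edgeFinset := card_mul_le_two_mul_card_edgeFinset s hd

lemma edgeSet_spanningCoe_induce_top (s : Set V) :
    ((⊤ : G.Subgraph).induce s).spanningCoe.edgeSet = {e ∈ G.edgeSet | ∀ x ∈ e, x ∈ s} := by
  ext e
  induction e using Sym2.ind with
  | _ a b => simpa using and_rotate.symm

lemma neighborSet_spanningCoe_induce_top {s : Set V} {x : V} (hx : x ∈ s) :
    ((⊤ : G.Subgraph).induce s).spanningCoe.neighborSet x = G.neighborSet x ∩ s := by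
  ext y
  simp [hx, and_comm]

lemma IsTruss.add_one_le_ncard_neighborSet_inter [Finite V] {k : ℕ} (h : G.IsTruss k) {u v : V}
    (huv : G.Adj u v) : k + 1 ≤ (G.neighborSet v ∩ insert u (G.neighborSet u)).ncard := by
  have hu : u ∉ {w | G.Adj u w ∧ G.Adj v w} := fun hw ↦ G.irrefl hw.1
  calc k + 1 ≤ {w | G.Adj u w ∧ G.Adj v w}.ncard + 1 := Nat.add_le_add_right (h.2 huv) 1
    _ = (insert u {w | G.Adj u w ∧ G.Adj v w}).ncard := (Set.ncard_insert_of_notMem hu).symm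
    _ ≤ _ := Set.ncard_le_ncard ?_
  rintro w (rfl | ⟨huw, hvw⟩)
  · exact ⟨huv.symm, Set.mem_insert _ _⟩
  · exact ⟨hvw, Set.mem_insert_of_mem _ huw⟩

lemma IsTruss.add_one_le_ncard_neighborSet [Finite V] {k : ℕ} (h : G.IsTruss k) (v : V) :
    k + 1 ≤ (G.neighborSet v).ncard :=
  have ⟨u, hvu⟩ := h.1 v
  (h.add_one_le_ncard_neighborSet_inter hvu.symm).trans
    (Set.ncard_le_ncard Set.inter_subset_left)

end SimpleGraph

theorem truss_closed_neighborhood_edges {V : Type*} [Fintype V]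
    (G : SimpleGraph V) (k : ℕ) (h : G.IsTruss k) (v : V) :
    (k + 2).choose 2 ≤
      {e ∈ G.edgeSet | ∀ x ∈ e, x ∈ insert v (G.neighborSet v)}.ncard := by
  classical
  set s := insert v (G.neighborSet v)
  have hs : k + 1 + 1 ≤ s.toFinset.card := by
    rw [← Set.ncard_eq_toFinset_card', Set.ncard_insert_of_notMem G.notMem_neighborSet_self]
    exact Nat.add_le_add_right (h.add_one_le_ncard_neighborSet v) 1
  have hdeg : ∀ x ∈ s.toFinset, k + 1 ≤ ((⊤ : G.Subgraph).induce s).spanningCoe.degree x := by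
    intro x hx
    rw [Set.mem_toFinset] at hx
    rw [← SimpleGraph.card_neighborSet_eq_degree, ← Set.toFinset_card,
      ← Set.ncard_eq_toFinset_card', SimpleGraph.neighborSet_spanningCoe_induce_top hx]
    rcases hx with rfl | hvx
    · rw [Set.inter_eq_left.2 (Set.subset_insert _ _)]
      exact h.add_one_le_ncard_neighborSet x
    · exact h.add_one_le_ncard_neighborSet_inter hvx
  rw [← SimpleGraph.edgeSet_spanningCoe_induce_top, ← SimpleGraph.coe_edgeFinset,
    Set.ncard_coe_finset]
  exact SimpleGraph.choose_two_le_card_edgeFinset s.toFinset hs hdeg
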